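/- Let |c₀⟩,|c₁⟩ be unit vectors in ℂ² with 0 < |⟨c₀|c₁⟩| < 1, and let W be a unitary on ℂ² with W|c₀⟩ = |c₁⟩ and W|c₁⟩ = (⟨c₀|c₁⟩/⟨c₁|c₀⟩)|c₀⟩, and let V be the swap unitary on ℂ²⊗ℂ². Then the eight unitaries V², V, (W⊗𝟙)V(W⊗𝟙), (V(W⊗𝟙))², W⊗𝟙, (W⊗𝟙)V, V(W⊗𝟙)V, V(W⊗𝟙) are pairwise distinct as maps on the four states |c_k⟩⊗|c_l⟩ up to global phase, and each maps every state |c_k⟩⊗|c_l⟩ to a state of the form (phase)·|c_m⟩⊗|c_n⟩. -/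

import Mathlib

open Matrix Kronecker

/-- The inner product ⟨x|y⟩ on ℂ². -/
noncomputable def inp (x y : Fin 2 → ℂ) : ℂ := star x ⬝ᵥ y

/-- The tensor product a ⊗ b of two vectors of ℂ², as a vector of ℂ²⊗ℂ². -/
def tv (a b : Fin 2 → ℂ) : Fin 2 × Fin 2 → ℂ := fun p => a p.1 * b p.2

/-- The swap unitary V on ℂ²⊗ℂ², V(a⊗b) = b⊗a. -/
def V : Matrix (Fin 2 × Fin 2) (Fin 2 × Fin 2) ℂ :=
  Matrix.of fun a b => if a.1 = b.2 ∧ a.2 = b.1 then 1 else 0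

/-
`V` sends `c k ⊗ c l` to `c l ⊗ c k`, and `W ⊗ 𝟙` sends it to a phase times `c (k+1) ⊗ c l`, the
phase `⟨c₀|c₁⟩/⟨c₁|c₀⟩` being unimodular. So each of the eight unitaries acts, up to phases, on the
labels `(k, l) ∈ Fin 2 × Fin 2` through the corresponding word in the swap and the flip of the first
label, and these eight label maps already differ on `(0,0)` or `(0,1)`. Labels can be read off
states up to phase: pairing `u • c m ⊗ c n = v • c m' ⊗ c n'` (with `|u| = |v| = 1`) against
`c m' ⊗ c n'` gives `|⟨c m'|c m⟩| |⟨c n'|c n⟩| = 1`, forcing `(m, n) = (m', n')` as `|⟨c₀|c₁⟩| < 1`.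
-/

theorem inp_comm (x y : Fin 2 → ℂ) : inp y x = star (inp x y) :=
  star_dotProduct y x

theorem norm_inp_div_inp_comm {x y : Fin 2 → ℂ} (h : inp x y ≠ 0) :
    ‖inp x y / inp y x‖ = 1 := by
  rw [norm_div, inp_comm x y, norm_star, div_self (norm_ne_zero_iff.mpr h)]

theorem tv_smul_left (z : ℂ) (a b : Fin 2 → ℂ) : tv (z • a) b = z • tv a b := by
  funext p
  simp only [tv, Pi.smul_apply, smul_eq_mul, mul_assoc]

theorem star_tv_dotProduct_tv (a b a' b' : Fin 2 → ℂ) :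
    star (tv a b) ⬝ᵥ tv a' b' = inp a a' * inp b b' := by
  simp only [inp, tv, dotProduct, Fintype.sum_prod_type, Fin.sum_univ_two, Pi.star_apply,
    star_mul']
  ring

theorem V_mulVec_tv (a b : Fin 2 → ℂ) : V *ᵥ tv a b = tv b a := by
  funext ⟨i, j⟩
  fin_cases i <;> fin_cases j <;>
    simp [mulVec, dotProduct, V, tv, Fintype.sum_prod_type, Fin.sum_univ_two] <;> ring

theorem kronecker_one_mulVec_tv (W : Matrix (Fin 2) (Fin 2) ℂ) (a b : Fin 2 → ℂ) :
    (W ⊗ₖ (1 : Matrix (Fin 2) (Fin 2) ℂ)) *ᵥ tv a b = tv (W *ᵥ a) b := by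
  funext ⟨i, j⟩
  fin_cases i <;> fin_cases j <;>
    simp [mulVec, dotProduct, tv, Fintype.sum_prod_type, Fin.sum_univ_two, kroneckerMap_apply,
      one_apply] <;> ring

def MapsProductsUpToPhase {ι : Type*} (c : ι → Fin 2 → ℂ)
    (A : Matrix (Fin 2 × Fin 2) (Fin 2 × Fin 2) ℂ) (f : ι × ι → ι × ι) : Prop :=
  ∀ k l : ι, ∃ z : ℂ, ‖z‖ = 1 ∧ A *ᵥ tv (c k) (c l) = z • tv (c (f (k, l)).1) (c (f (k, l)).2)

namespace MapsProductsUpToPhase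

variable {ι : Type*} {c : ι → Fin 2 → ℂ} {A B : Matrix (Fin 2 × Fin 2) (Fin 2 × Fin 2) ℂ}
  {f g : ι × ι → ι × ι}

theorem swap (c : ι → Fin 2 → ℂ) : MapsProductsUpToPhase c V Prod.swap :=
  fun k l => ⟨1, norm_one, by rw [V_mulVec_tv, one_smul]; rfl⟩

theorem kronecker_one {W : Matrix (Fin 2) (Fin 2) ℂ} {σ : ι → ι}
    (hW : ∀ k, ∃ z : ℂ, ‖z‖ = 1 ∧ W *ᵥ c k = z • c (σ k)) :
    MapsProductsUpToPhase c (W ⊗ₖ (1 : Matrix (Fin 2) (Fin 2) ℂ)) (Prod.map σ id) := by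
  intro k l
  obtain ⟨z, hz, h⟩ := hW k
  exact ⟨z, hz, by rw [kronecker_one_mulVec_tv, h, tv_smul_left]; rfl⟩

theorem mul (hA : MapsProductsUpToPhase c A f) (hB : MapsProductsUpToPhase c B g) :
    MapsProductsUpToPhase c (A * B) (f ∘ g) := by
  intro k l
  obtain ⟨z, hz, hBkl⟩ := hB k l
  obtain ⟨w, hw, hAg⟩ := hA (g (k, l)).1 (g (k, l)).2
  refine ⟨w * z, by rw [norm_mul, hw, hz, one_mul], ?_⟩
  rw [← mulVec_mulVec, hBkl, mulVec_smul, hAg, smul_smul, mul_comm]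
  rfl

end MapsProductsUpToPhase

theorem eq_of_smul_tv_eq_smul_tv {ι : Type*} {c : ι → Fin 2 → ℂ}
    (hnorm : ∀ a, inp (c a) (c a) = 1) (hsep : ∀ a b, a ≠ b → ‖inp (c a) (c b)‖ < 1)
    {m n m' n' : ι} {u v : ℂ} (hu : ‖u‖ = 1) (hv : ‖v‖ = 1)
    (h : u • tv (c m) (c n) = v • tv (c m') (c n')) : (m, n) = (m', n') := by
  have hle : ∀ a b, ‖inp (c a) (c b)‖ ≤ 1 := fun a b => by
    rcases eq_or_ne a b with rfl | hab
    · rw [hnorm, norm_one]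
    · exact (hsep a b hab).le
  have hpair := congrArg (fun x => ‖star (tv (c m') (c n')) ⬝ᵥ x‖) h
  simp only [dotProduct_smul, star_tv_dotProduct_tv, hnorm, smul_eq_mul, norm_mul, hu, hv,
    one_mul, mul_one] at hpair
  by_contra hne
  have hlt : ‖inp (c m') (c m)‖ * ‖inp (c n') (c n)‖ < 1 := by
    rcases eq_or_ne m' m with rfl | hm
    · have hn : n' ≠ n := fun hn => hne (by rw [hn])
      simpa [hnorm] using hsep n' n hn
    · exact mul_lt_one_of_nonneg_of_lt_one_left (norm_nonneg _) (hsep m' m hm) (hle n' n)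
  exact hlt.ne hpair

theorem MapsProductsUpToPhase.apply_eq {ι : Type*} {c : ι → Fin 2 → ℂ}
    (hnorm : ∀ a, inp (c a) (c a) = 1) (hsep : ∀ a b, a ≠ b → ‖inp (c a) (c b)‖ < 1)
    {A B : Matrix (Fin 2 × Fin 2) (Fin 2 × Fin 2) ℂ} {f g : ι × ι → ι × ι}
    (hA : MapsProductsUpToPhase c A f) (hB : MapsProductsUpToPhase c B g) {z : ℂ} (hz : ‖z‖ = 1)
    {k l : ι} (h : A *ᵥ tv (c k) (c l) = z • B *ᵥ tv (c k) (c l)) : f (k, l) = g (k, l) := by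
  obtain ⟨u, hu, hAkl⟩ := hA k l
  obtain ⟨v, hv, hBkl⟩ := hB k l
  rw [hAkl, hBkl, smul_smul] at h
  exact eq_of_smul_tv_eq_smul_tv hnorm hsep hu (by rw [norm_mul, hz, hv, one_mul]) h

def flipFst : Fin 2 × Fin 2 → Fin 2 × Fin 2 := Prod.map (· + 1) id

-- The label maps of `V², V, (W⊗𝟙)V(W⊗𝟙), (V(W⊗𝟙))², W⊗𝟙, (W⊗𝟙)V, V(W⊗𝟙)V, V(W⊗𝟙)`.
def labelMaps : Fin 8 → Fin 2 × Fin 2 → Fin 2 × Fin 2 :=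
  ![Prod.swap ∘ Prod.swap, Prod.swap, flipFst ∘ Prod.swap ∘ flipFst,
    Prod.swap ∘ flipFst ∘ Prod.swap ∘ flipFst, flipFst, flipFst ∘ Prod.swap,
    Prod.swap ∘ flipFst ∘ Prod.swap, Prod.swap ∘ flipFst]

theorem labelMaps_eq_of_eq_of_eq {i j : Fin 8} (h₀₀ : labelMaps i (0, 0) = labelMaps j (0, 0))
    (h₀₁ : labelMaps i (0, 1) = labelMaps j (0, 1)) : i = j := by
  revert i j
  decide

theorem stmt_17_general (c₀ c₁ : Fin 2 → ℂ) (h₀ : inp c₀ c₀ = 1) (h₁ : inp c₁ c₁ = 1)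
    (hlow : 0 < ‖inp c₀ c₁‖) (hup : ‖inp c₀ c₁‖ < 1)
    (W : Matrix (Fin 2) (Fin 2) ℂ)
    (hW0 : W.mulVec c₀ = c₁)
    (hW1 : W.mulVec c₁ = (inp c₀ c₁ / inp c₁ c₀) • c₀)
    (c : Fin 2 → Fin 2 → ℂ) (hc : c = ![c₀, c₁])
    (W1 : Matrix (Fin 2 × Fin 2) (Fin 2 × Fin 2) ℂ)
    (hW1' : W1 = W ⊗ₖ (1 : Matrix (Fin 2) (Fin 2) ℂ))
    (L : Fin 8 → Matrix (Fin 2 × Fin 2) (Fin 2 × Fin 2) ℂ)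
    (hL : L = ![V * V, V, W1 * V * W1, (V * W1) ^ 2, W1, W1 * V, V * W1 * V, V * W1]) :
    (∀ i : Fin 8, ∀ k l : Fin 2, ∃ (z : ℂ) (m n : Fin 2),
      ‖z‖ = 1 ∧ (L i).mulVec (tv (c k) (c l)) = z • tv (c m) (c n)) ∧
    (∀ i j : Fin 8, i ≠ j → ¬ ∃ z : ℂ, ‖z‖ = 1 ∧
      ∀ k l : Fin 2, (L i).mulVec (tv (c k) (c l)) = z • (L j).mulVec (tv (c k) (c l))) := by
  subst hc hW1'
  have hnorm : ∀ a, inp (![c₀, c₁] a) (![c₀, c₁] a) = 1 := by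
    intro a; fin_cases a <;> assumption
  have hsep : ∀ a b, a ≠ b → ‖inp (![c₀, c₁] a) (![c₀, c₁] b)‖ < 1 := by
    intro a b hab
    fin_cases a <;> fin_cases b <;> simp_all [inp_comm c₀ c₁]
  have hWc : ∀ k, ∃ z : ℂ, ‖z‖ = 1 ∧ W *ᵥ ![c₀, c₁] k = z • ![c₀, c₁] (k + 1) := by
    intro k
    fin_cases k
    · exact ⟨1, norm_one, by simpa using hW0⟩
    · exact ⟨_, norm_inp_div_inp_comm (norm_pos_iff.mp hlow), by simpa using hW1⟩
  have hV := MapsProductsUpToPhase.swap ![c₀, c₁]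
  have hF : MapsProductsUpToPhase ![c₀, c₁] _ flipFst := .kronecker_one hWc
  have hLi : ∀ i, MapsProductsUpToPhase ![c₀, c₁] (L i) (labelMaps i) := by
    subst hL
    intro i
    fin_cases i <;> simp only [labelMaps, Fin.reduceFinMk, Matrix.cons_val]
    · exact hV.mul hV
    · exact hV
    · exact (hF.mul hV).mul hF
    · rw [pow_two]
      exact (hV.mul hF).mul (hV.mul hF)
    · exact hF
    · exact hF.mul hV
    · exact (hV.mul hF).mul hV
    · exact hV.mul hF
  refine ⟨fun i k l => ?_, fun i j hij ⟨z, hz, h⟩ => hij ?_⟩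
  · obtain ⟨z, hz, h⟩ := hLi i k l
    exact ⟨z, _, _, hz, h⟩
  · exact labelMaps_eq_of_eq_of_eq ((hLi i).apply_eq hnorm hsep (hLi j) hz (h 0 0))
      ((hLi i).apply_eq hnorm hsep (hLi j) hz (h 0 1))

/-- Given free states c₀, c₁ with 0 < |⟨c₀|c₁⟩| < 1 and the flip unitary W
(W c₀ = c₁, W c₁ = (⟨c₀|c₁⟩/⟨c₁|c₀⟩) c₀), the eight unitaries
V², V, (W⊗𝟙)V(W⊗𝟙), (V(W⊗𝟙))², W⊗𝟙, (W⊗𝟙)V, V(W⊗𝟙)V, V(W⊗𝟙) each map every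
|c_k⟩⊗|c_l⟩ to a phase times some |c_m⟩⊗|c_n⟩, and are pairwise distinct as maps
on the four free products up to global phase. -/
theorem stmt_17 (c₀ c₁ : Fin 2 → ℂ) (h₀ : inp c₀ c₀ = 1) (h₁ : inp c₁ c₁ = 1)
    (hlow : 0 < ‖inp c₀ c₁‖) (hup : ‖inp c₀ c₁‖ < 1)
    (W : Matrix (Fin 2) (Fin 2) ℂ) (hW : W ∈ Matrix.unitaryGroup (Fin 2) ℂ)
    (hW0 : W.mulVec c₀ = c₁)
    (hW1 : W.mulVec c₁ = (inp c₀ c₁ / inp c₁ c₀) • c₀)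
    (c : Fin 2 → Fin 2 → ℂ) (hc : c = ![c₀, c₁])
    (W1 : Matrix (Fin 2 × Fin 2) (Fin 2 × Fin 2) ℂ)
    (hW1' : W1 = W ⊗ₖ (1 : Matrix (Fin 2) (Fin 2) ℂ))
    (L : Fin 8 → Matrix (Fin 2 × Fin 2) (Fin 2 × Fin 2) ℂ)
    (hL : L = ![V * V, V, W1 * V * W1, (V * W1) ^ 2, W1, W1 * V, V * W1 * V, V * W1]) :
    (∀ i : Fin 8, ∀ k l : Fin 2, ∃ (z : ℂ) (m n : Fin 2),
      ‖z‖ = 1 ∧ (L i).mulVec (tv (c k) (c l)) = z • tv (c m) (c n)) ∧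
    (∀ i j : Fin 8, i ≠ j → ¬ ∃ z : ℂ, ‖z‖ = 1 ∧
      ∀ k l : Fin 2, (L i).mulVec (tv (c k) (c l)) = z • (L j).mulVec (tv (c k) (c l))) :=
  stmt_17_general c₀ c₁ h₀ h₁ hlow hup W hW0 hW1 c hc W1 hW1' L hL
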